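/- Suppose an operator X: ℝ^{k×p} → ℝ^N is linear, and an error matrix Δ satisfies (1/(2N))‖X(Δ)‖₂² ≥ κ‖Δ‖_F² for some κ > 0, together with the inequalities (1/(2N))‖X(Δ)‖₂² ≤ 2λ‖Δ‖_* and ‖Δ‖_* ≤ 4√(2r)·‖Δ‖_F + 4ρ for some λ, ρ ≥ 0 and integer r ≥ 1. Then ‖Δ‖_F ≤ max{ 32λ√r / κ, (16λρ/κ)^{1/2} }. -/

import Mathlib

open Matrix BigOperators

noncomputable def frobNorm {k p : ℕ} (A : Matrix (Fin k) (Fin p) ℝ) : ℝ :=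
  Real.sqrt (∑ i, ∑ j, (A i j) ^ 2)

noncomputable def singVal {k p : ℕ} (A : Matrix (Fin k) (Fin p) ℝ) (i : Fin p) : ℝ :=
  Real.sqrt ((show (Aᵀ * A).IsHermitian by
    rw [Matrix.IsHermitian, Matrix.conjTranspose_eq_transpose_of_trivial, Matrix.transpose_mul,
      Matrix.transpose_transpose]).eigenvalues i)

noncomputable def nuclearNorm {k p : ℕ} (A : Matrix (Fin k) (Fin p) ℝ) : ℝ :=
  ∑ i, singVal A i

noncomputable def opNorm {k p : ℕ} (A : Matrix (Fin k) (Fin p) ℝ) : ℝ :=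
  ⨆ i, singVal A i

noncomputable def euclNorm {n : ℕ} (v : Fin n → ℝ) : ℝ :=
  Real.sqrt (∑ i, (v i) ^ 2)

/-- If `x` exceeded both bounds, the linear and the constant term would each be less than
`κ x² / 2`. -/
theorem le_max_of_mul_sq_le {κ a b x : ℝ} (hκ : 0 < κ) (h : κ * x ^ 2 ≤ a * x + b) :
    x ≤ max (2 * a / κ) (Real.sqrt (2 * b / κ)) := by
  by_contra! hx
  obtain ⟨hxa, hxb⟩ := max_lt_iff.mp hx
  have hx0 : 0 < x := (Real.sqrt_nonneg _).trans_lt hxb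
  have hlin : 2 * a < κ * x := (div_lt_iff₀ hκ).mp hxa |>.trans_eq (mul_comm _ _)
  have hconst : 2 * b < κ * x ^ 2 :=
    (div_lt_iff₀' hκ).mp ((Real.sqrt_lt' hx0).mp hxb)
  nlinarith

theorem Real.sqrt_two_mul_le (x : ℝ) : Real.sqrt (2 * x) ≤ 2 * Real.sqrt x := by
  rw [Real.sqrt_mul zero_le_two]
  gcongr
  exact Real.sqrt_le_iff.mpr ⟨zero_le_two, by norm_num⟩

theorem stmt_4_general {k p N : ℕ}
    (X : Matrix (Fin k) (Fin p) ℝ →ₗ[ℝ] (Fin N → ℝ))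
    (Δ : Matrix (Fin k) (Fin p) ℝ)
    (κ lam ρ : ℝ) (r : ℕ) (hκ : 0 < κ) (hlam : 0 ≤ lam)
    (h1 : κ * frobNorm Δ ^ 2 ≤ (1 / (2 * N)) * euclNorm (X Δ) ^ 2)
    (h2 : (1 / (2 * N)) * euclNorm (X Δ) ^ 2 ≤ 2 * lam * nuclearNorm Δ)
    (h3 : nuclearNorm Δ ≤ 4 * Real.sqrt (2 * r) * frobNorm Δ + 4 * ρ) :
    frobNorm Δ ≤ max (32 * lam * Real.sqrt r / κ) (Real.sqrt (16 * lam * ρ / κ)) := by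
  have hquad : κ * frobNorm Δ ^ 2
      ≤ (8 * lam * Real.sqrt (2 * r)) * frobNorm Δ + 8 * lam * ρ :=
    calc κ * frobNorm Δ ^ 2 ≤ 2 * lam * nuclearNorm Δ := h1.trans h2
      _ ≤ 2 * lam * (4 * Real.sqrt (2 * r) * frobNorm Δ + 4 * ρ) := by gcongr
      _ = _ := by ring
  calc frobNorm Δ
      ≤ max (2 * (8 * lam * Real.sqrt (2 * r)) / κ) (Real.sqrt (2 * (8 * lam * ρ) / κ)) :=
        le_max_of_mul_sq_le hκ hquad
    _ ≤ max (32 * lam * Real.sqrt r / κ) (Real.sqrt (16 * lam * ρ / κ)) := by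
        have hsqrt := mul_le_mul_of_nonneg_left (Real.sqrt_two_mul_le r) hlam
        gcongr max (?_ / κ) (Real.sqrt (?_ / κ)) <;> linarith

theorem stmt_4 {k p N : ℕ}
    (X : Matrix (Fin k) (Fin p) ℝ →ₗ[ℝ] (Fin N → ℝ))
    (Δ : Matrix (Fin k) (Fin p) ℝ)
    (κ lam ρ : ℝ) (r : ℕ) (hκ : 0 < κ) (hlam : 0 ≤ lam) (hρ : 0 ≤ ρ) (hrr : 1 ≤ r)
    (h1 : κ * frobNorm Δ ^ 2 ≤ (1 / (2 * N)) * euclNorm (X Δ) ^ 2)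
    (h2 : (1 / (2 * N)) * euclNorm (X Δ) ^ 2 ≤ 2 * lam * nuclearNorm Δ)
    (h3 : nuclearNorm Δ ≤ 4 * Real.sqrt (2 * r) * frobNorm Δ + 4 * ρ) :
    frobNorm Δ ≤ max (32 * lam * Real.sqrt r / κ) (Real.sqrt (16 * lam * ρ / κ)) :=
  stmt_4_general X Δ κ lam ρ r hκ hlam h1 h2 h3
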